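/- Let μ, ν ∈ ℝ with ν ≠ μ. For every t > 0 and x, y ≥ 0, the partial derivative ∂_y H(t;x,y) exists and G(t;x,y) + ∂_y H(t;x,y) = (1/√t)·[φ((x−y+μt)/√t) − e^{2μy} φ((x+y+μt)/√t)] − (2ν e^{2μy}/(ν−μ))·[ μ Ψ((x+y+μt)/√t) + (μ−2ν) e^{2(ν−μ)(x+y+νt)} Ψ((x+y+(2ν−μ)t)/√t) ]. -/

import Mathlib

open MeasureTheory Set Filter

/-- Standard normal density. -/
noncomputable def phi (x : ℝ) : ℝ := (1 / Real.sqrt (2 * Real.pi)) * Real.exp (-x ^ 2 / 2)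

/-- Standard normal tail function. -/
noncomputable def Psi (x : ℝ) : ℝ := ∫ y in Set.Ioi x, phi y

lemma integrable_phi : Integrable phi := by
  have h : Integrable (fun x : ℝ => Real.exp (-(1/2) * x ^ 2)) := integrable_exp_neg_mul_sq (by norm_num)
  have : phi = fun x => (1 / Real.sqrt (2 * Real.pi)) * Real.exp (-(1/2) * x ^ 2) := by
    funext x; simp only [phi]; ring_nf
  rw [this]; exact h.const_mul _

lemma continuous_phi : Continuous phi := by
  unfold phi; continuity

lemma hasDerivAt_Psi (x : ℝ) : HasDerivAt Psi (-phi x) x := by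
  have hint := integrable_phi
  have key : ∀ z : ℝ, Psi z = Psi 0 - ∫ s in (0:ℝ)..z, phi s := by
    intro z
    have h1 : (∫ s in Iic z, phi s) + (∫ s in Ioi z, phi s) = ∫ s, phi s :=
      intervalIntegral.integral_Iic_add_Ioi hint.integrableOn hint.integrableOn
    have h2 : (∫ s in Iic (0:ℝ), phi s) + (∫ s in Ioi (0:ℝ), phi s) = ∫ s, phi s :=
      intervalIntegral.integral_Iic_add_Ioi hint.integrableOn hint.integrableOn
    have h3 : (∫ s in Iic z, phi s) - (∫ s in Iic (0:ℝ), phi s) = ∫ s in (0:ℝ)..z, phi s :=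
      intervalIntegral.integral_Iic_sub_Iic hint.integrableOn hint.integrableOn
    simp only [Psi]
    linarith
  have hF : HasDerivAt (fun z => ∫ s in (0:ℝ)..z, phi s) (phi x) x :=
    (continuous_phi.integral_hasStrictDerivAt 0 x).hasDerivAt
  have : HasDerivAt (fun z => Psi 0 - ∫ s in (0:ℝ)..z, phi s) (-phi x) x := by
    simpa [Pi.sub_def] using (hasDerivAt_const x (Psi 0)).sub hF
  exact this.congr_of_eventuallyEq (Filter.Eventually.of_forall key)

/-- The kernel `G(t;x,y)` with drift parameter `μ`. -/
noncomputable def Gker (μ t x y : ℝ) : ℝ :=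
  (1 / Real.sqrt t) *
      (Real.exp (2 * μ * y) * phi ((x + y + μ * t) / Real.sqrt t) +
        phi ((x - y + μ * t) / Real.sqrt t)) -
    2 * μ * Real.exp (2 * μ * y) * Psi ((x + y + μ * t) / Real.sqrt t)

/-- The kernel `H(t;x,y)` with parameters `μ, ν`. -/
noncomputable def Hker (μ ν t x y : ℝ) : ℝ :=
  if ν = μ then
    2 * Real.exp (2 * μ * y) *
      ((1 + μ * (x + y + μ * t)) * Psi ((x + y + μ * t) / Real.sqrt t) -
        μ * Real.sqrt t * phi ((x + y + μ * t) / Real.sqrt t))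
  else
    Real.exp (2 * μ * y) / (ν - μ) *
      ((2 * ν - μ) * Real.exp (2 * (ν - μ) * (x + y + ν * t)) *
          Psi ((x + y + (2 * ν - μ) * t) / Real.sqrt t) -
        μ * Psi ((x + y + μ * t) / Real.sqrt t))

/-- The density `g(t;b,s)` of `(B_t^{-μ}, S_t^{-μ})`, vanishing off `{b ≤ s, 0 ≤ s}`. -/
noncomputable def gker (μ t b s : ℝ) : ℝ :=
  if b ≤ s ∧ 0 ≤ s then
    Real.sqrt (2 / Real.pi) * t ^ (-(3 : ℝ) / 2) * (2 * s - b) *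
      Real.exp (-(2 * s - b) ^ 2 / (2 * t) - μ * (b + μ * t / 2))
  else 0

/-- Spatial derivative (one-sided at `x = 0`). -/
noncomputable def ux (u : ℝ → ℝ → ℝ) (t x : ℝ) : ℝ :=
  derivWithin (fun z => u t z) (Set.Ici 0) x

/-- Second spatial derivative (one-sided at `x = 0`). -/
noncomputable def uxx (u : ℝ → ℝ → ℝ) (t x : ℝ) : ℝ :=
  derivWithin (fun z => ux u t z) (Set.Ici 0) x

/-- Time derivative. -/
noncomputable def ut (u : ℝ → ℝ → ℝ) (t x : ℝ) : ℝ :=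
  deriv (fun s => u s x) t

/-- `u` is a solution of the Stroock–Williams problem with parameters `μ, ν`
and initial data `f`. -/
def IsSWSolution (μ ν : ℝ) (f : ℝ → ℝ) (u : ℝ → ℝ → ℝ) : Prop :=
  ContDiffOn ℝ (⊤ : ℕ∞) (fun p : ℝ × ℝ => u p.1 p.2) (Set.Ioi 0 ×ˢ Set.Ici 0) ∧
  (∀ T > (0 : ℝ),
    ContinuousOn (fun p : ℝ × ℝ => u p.1 p.2) (Set.Icc 0 T ×ˢ Set.Ici 0) ∧
    ContinuousOn (fun p : ℝ × ℝ => ux u p.1 p.2) (Set.Icc 0 T ×ˢ Set.Ici 0) ∧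
    ∃ C : ℝ, ∀ p ∈ Set.Icc (0 : ℝ) T ×ˢ Set.Ici (0 : ℝ),
      |u p.1 p.2| ≤ C ∧ |ux u p.1 p.2| ≤ C) ∧
  (∀ t > (0 : ℝ), Filter.Tendsto (fun x => u t x) Filter.atTop (nhds 0)) ∧
  (∀ t > (0 : ℝ), ∀ x ≥ (0 : ℝ), ut u t x = μ * ux u t x + (1 / 2) * uxx u t x) ∧
  (∀ x ≥ (0 : ℝ), u 0 x = f x) ∧
  (∀ t > (0 : ℝ), ut u t 0 = ν * ux u t 0)

/-- `f` is admissible initial data: `C¹` on `[0,∞)` with `f` and `f'` bounded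
and `f(x) → 0` as `x → ∞`. -/
def IsInitialData (f : ℝ → ℝ) : Prop :=
  ContDiffOn ℝ 1 f (Set.Ici 0) ∧
  (∃ C : ℝ, ∀ x ∈ Set.Ici (0 : ℝ), |f x| ≤ C ∧ |derivWithin f (Set.Ici 0) x| ≤ C) ∧
  Filter.Tendsto f Filter.atTop (nhds 0)


/-- closed formula for `G + ∂_y H` when `ν ≠ μ`. -/
theorem G_add_Hy_formula_of_ne (μ ν : ℝ) (hne : ν ≠ μ) :
    ∀ t > (0 : ℝ), ∀ x ≥ (0 : ℝ), ∀ y ≥ (0 : ℝ),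
      HasDerivWithinAt (fun z => Hker μ ν t x z)
        ((1 / Real.sqrt t) *
            (phi ((x - y + μ * t) / Real.sqrt t) -
              Real.exp (2 * μ * y) * phi ((x + y + μ * t) / Real.sqrt t)) -
          2 * ν * Real.exp (2 * μ * y) / (ν - μ) *
            (μ * Psi ((x + y + μ * t) / Real.sqrt t) +
              (μ - 2 * ν) * Real.exp (2 * (ν - μ) * (x + y + ν * t)) *
                Psi ((x + y + (2 * ν - μ) * t) / Real.sqrt t)) -
          Gker μ t x y)
        (Set.Ici 0) y := by
  intro t ht x hx y hy
  have hst : Real.sqrt t ≠ 0 := ne_of_gt (Real.sqrt_pos.mpr ht)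
  have hnm : ν - μ ≠ 0 := sub_ne_zero.mpr hne
  have hA : HasDerivAt (fun z : ℝ => Real.exp (2 * μ * z))
      (Real.exp (2 * μ * y) * (2 * μ)) y := by
    have hin : HasDerivAt (fun z : ℝ => 2 * μ * z) (2 * μ) y := by
      simpa using (hasDerivAt_id y).const_mul (2 * μ)
    exact hin.exp
  have hB : HasDerivAt (fun z : ℝ => Real.exp (2 * (ν - μ) * (x + z + ν * t)))
      (Real.exp (2 * (ν - μ) * (x + y + ν * t)) * (2 * (ν - μ))) y := by
    have hin : HasDerivAt (fun z : ℝ => 2 * (ν - μ) * (x + z + ν * t)) (2 * (ν - μ)) y := by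
      have := (((hasDerivAt_id y).const_add x).add_const (ν * t)).const_mul (2 * (ν - μ))
      simpa using this
    exact hin.exp
  have hI1 : HasDerivAt (fun z : ℝ => (x + z + (2 * ν - μ) * t) / Real.sqrt t)
      (1 / Real.sqrt t) y := by
    have := (((hasDerivAt_id y).const_add x).add_const ((2 * ν - μ) * t)).div_const (Real.sqrt t)
    simpa [one_div] using this
  have hI2 : HasDerivAt (fun z : ℝ => (x + z + μ * t) / Real.sqrt t) (1 / Real.sqrt t) y := by
    have := (((hasDerivAt_id y).const_add x).add_const (μ * t)).div_const (Real.sqrt t)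
    simpa [one_div] using this
  have hP1 : HasDerivAt (fun z : ℝ => Psi ((x + z + (2 * ν - μ) * t) / Real.sqrt t))
      (-phi ((x + y + (2 * ν - μ) * t) / Real.sqrt t) * (1 / Real.sqrt t)) y :=
    (hasDerivAt_Psi _).comp y hI1
  have hP2 : HasDerivAt (fun z : ℝ => Psi ((x + z + μ * t) / Real.sqrt t))
      (-phi ((x + y + μ * t) / Real.sqrt t) * (1 / Real.sqrt t)) y :=
    (hasDerivAt_Psi _).comp y hI2
  have hmain := (hA.div_const (ν - μ)).mul (((hB.const_mul (2 * ν - μ)).mul hP1).sub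
    (hP2.const_mul μ))
  have hH : HasDerivAt (fun z => Hker μ ν t x z)
      (Real.exp (2 * μ * y) * (2 * μ) / (ν - μ) *
          ((2 * ν - μ) * Real.exp (2 * (ν - μ) * (x + y + ν * t)) *
              Psi ((x + y + (2 * ν - μ) * t) / Real.sqrt t) -
            μ * Psi ((x + y + μ * t) / Real.sqrt t)) +
        Real.exp (2 * μ * y) / (ν - μ) *
          ((2 * ν - μ) * (Real.exp (2 * (ν - μ) * (x + y + ν * t)) * (2 * (ν - μ))) *
                Psi ((x + y + (2 * ν - μ) * t) / Real.sqrt t) +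
              (2 * ν - μ) * Real.exp (2 * (ν - μ) * (x + y + ν * t)) *
                (-phi ((x + y + (2 * ν - μ) * t) / Real.sqrt t) * (1 / Real.sqrt t)) -
            μ * (-phi ((x + y + μ * t) / Real.sqrt t) * (1 / Real.sqrt t)))) y := by
    simpa only [Hker, if_neg hne, Pi.mul_def, Pi.sub_def] using hmain
  have hE : Real.exp (2 * (ν - μ) * (x + y + ν * t)) ≠ 0 := Real.exp_ne_zero _
  have hkey : phi ((x + y + (2 * ν - μ) * t) / Real.sqrt t) =
      phi ((x + y + μ * t) / Real.sqrt t) / Real.exp (2 * (ν - μ) * (x + y + ν * t)) := by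
    rw [eq_div_iff hE]
    simp only [phi]
    rw [mul_assoc, ← Real.exp_add]
    congr 1
    rw [div_pow, div_pow, Real.sq_sqrt ht.le]
    field_simp
    ring
  apply HasDerivAt.hasDerivWithinAt
  refine hH.congr_deriv ?_
  simp only [Gker]
  rw [hkey]
  field_simp
  ring
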